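/- Let α, β > −1, let p ≥ 1, let λ be a partition with at most p+1 parts (shifted coordinates λ̃_i := λ_i + p + 1 − i for 1 ≤ i ≤ p+1), and let x_1, …, x_p be real numbers. Let M be the (p+1)×(p+1) matrix with M_{i,j} = c̿ᵒ_{λ̃_i} · P^{(α,β)}_{λ̃_i}(x_j) for 1 ≤ j ≤ p and M_{i,p+1} = c̿ᵒ_{λ̃_i} · P^{(α,β)}_{λ̃_i}(1). Then det M = (Π_{j=1}^{p} (x_j − 1)) · Σ_{μ ≺ λ} det[ c̄ᵉ_{μ̃_i} · P^{(α+1,β)}_{μ̃_i}(x_j) ]_{i,j=1}^{p}, where the (finite) sum runs over all partitions μ with at most p parts that interlace λ, i.e. λ_1 ≥ μ_1 ≥ λ_2 ≥ μ_2 ≥ … ≥ μ_p ≥ λ_{p+1}, and μ̃_i := μ_i + p − i. -/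

import Mathlib

/-!
The contiguous relation
`c̿ᵒ_{k+1} P^{(α,β)}_{k+1} - c̿ᵒ_k P^{(α,β)}_k = (x - 1) c̄ᵉ_k P^{(α+1,β)}_k`
telescopes; in particular `c̿ᵒ_k P^{(α,β)}_k(1) = 1`, so the last column of the matrix consists
of ones. Subtracting from each row the next one leaves `(0, …, 0, 1)` as last column, and row
`i` becomes `(x_j - 1) ∑ c̄ᵉ_k P^{(α+1,β)}_k(x_j)` over `λ̃_{i+1} ≤ k < λ̃_i`. Pulling out the
factors `x_j - 1` and expanding the determinant multilinearly in the rows gives a sum over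
choices `k_i = μ_i + p - 1 - i`, and these `μ` are exactly the partitions interlacing `λ`.
-/

open Real MeasureTheory

noncomputable def jacA (α β : ℝ) (k : ℕ) : ℝ :=
  if k = 0 then (β - α) / (α + β + 2)
  else (β - α) * (α + β) / ((2*(k:ℝ) + α + β) * (2*(k:ℝ) + α + β + 2))

noncomputable def jacB (α β : ℝ) (k : ℕ) : ℝ :=
  2 * ((k:ℝ) + α) * ((k:ℝ) + β) / ((2*(k:ℝ) + α + β) * (2*(k:ℝ) + α + β + 1))

noncomputable def jacC (α β : ℝ) (k : ℕ) : ℝ :=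
  if k = 0 then 2 / (α + β + 2)
  else 2 * ((k:ℝ) + 1) * ((k:ℝ) + 1 + α + β) /
    ((2*(k:ℝ) + α + β + 1) * (2*(k:ℝ) + α + β + 2))

/-- The Jacobi polynomials `P^{(α,β)}_k` (as functions `ℝ → ℝ`), defined by the
three-term recurrence. -/
noncomputable def jacP (α β : ℝ) : ℕ → ℝ → ℝ
  | 0 => fun _ => 1
  | 1 => fun x => (x - jacA α β 0) / jacC α β 0
  | (k+2) => fun x =>
      ((x - jacA α β (k+1)) * jacP α β (k+1) x - jacB α β (k+1) * jacP α β k x) / jacC α β (k+1)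

/-- `c̄ᵒ_k` -/
noncomputable def cBarOdd (α β : ℝ) (k : ℕ) : ℝ :=
  if k = 0 then Real.Gamma (α + β + 2) / Real.Gamma (β + 1)
  else (2*(k:ℝ) + α + β + 1) * Real.Gamma ((k:ℝ) + α + β + 1) / Real.Gamma ((k:ℝ) + β + 1)

/-- `c̿ᵒ_k` -/
noncomputable def cBarBarOdd (α : ℝ) (k : ℕ) : ℝ :=
  Real.Gamma ((k:ℝ) + 1) * Real.Gamma (α + 1) / Real.Gamma (α + (k:ℝ) + 1)

/-- `c̄ᵉ_k` -/
noncomputable def cBarEven (α β : ℝ) (k : ℕ) : ℝ :=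
  (2*(k:ℝ) + α + β + 2) * Real.Gamma ((k:ℝ) + 1) * Real.Gamma (α + 1) /
    (2 * Real.Gamma (α + (k:ℝ) + 2))

/-- `c̿ᵉ_k` -/
noncomputable def cBarBarEven (α β : ℝ) (k : ℕ) : ℝ :=
  Real.Gamma ((k:ℝ) + α + β + 2) / Real.Gamma ((k:ℝ) + β + 1)

/-- `φᵒ_k` -/
noncomputable def phiOdd (α β : ℝ) (k : ℕ) : ℝ := cBarOdd α β k / cBarBarOdd α k

/-- `φᵉ_k` -/
noncomputable def phiEven (α β : ℝ) (k : ℕ) : ℝ := cBarEven α β k / cBarBarEven α β k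

/-- The Jacobi weight `w_{(α,β)}(x) = (1-x)^α (1+x)^β`. -/
noncomputable def jacWeight (α β : ℝ) (x : ℝ) : ℝ := (1 - x) ^ α * (1 + x) ^ β

/-- The weighted inner product `⟨f,g⟩_{(α,β)}`. -/
noncomputable def jacInner (α β : ℝ) (f g : ℝ → ℝ) : ℝ :=
  ∫ x in (-1:ℝ)..1, f x * g x * jacWeight α β x

open scoped Classical

section Recurrence

variable {α β : ℝ}

lemma two_mul_jacP_one (hs : -2 < α + β) (x : ℝ) :
    2 * jacP α β 1 x = (α + β + 2) * x + α - β := by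
  have : α + β + 2 ≠ 0 := by linarith
  rw [jacP, jacA, jacC, if_pos rfl, if_pos rfl]
  field_simp
  ring

lemma jacP_add_two (hs : -2 < α + β) (k : ℕ) (x : ℝ) :
    2 * (k + 2) * (k + α + β + 2) * (2 * k + α + β + 2) * jacP α β (k + 2) x
      = ((2 * k + α + β + 2) * (2 * k + α + β + 4) * x + α ^ 2 - β ^ 2)
          * (2 * k + α + β + 3) * jacP α β (k + 1) x
        - 2 * (k + α + 1) * (k + β + 1) * (2 * k + α + β + 4) * jacP α β k x := by
  have hk : (0 : ℝ) ≤ k := k.cast_nonneg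
  have h₁ : (k : ℝ) + 1 + 1 + α + β ≠ 0 := by linarith
  have h₂ : 2 * ((k : ℝ) + 1) + α + β ≠ 0 := by linarith
  have h₃ : 2 * ((k : ℝ) + 1) + α + β + 1 ≠ 0 := by linarith
  have h₄ : 2 * ((k : ℝ) + 1) + α + β + 2 ≠ 0 := by linarith
  rw [jacP, jacA, jacB, jacC, if_neg k.succ_ne_zero, if_neg k.succ_ne_zero]
  push_cast
  field_simp
  ring

-- Two contiguous relations in `α`, proved jointly: each inductive step of one uses the other.
theorem jacP_contiguous (hs : -2 < α + β) (n : ℕ) (x : ℝ) :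
    2 * ((n + 1) * jacP α β (n + 1) x - (n + α + 1) * jacP α β n x)
        = (x - 1) * (2 * n + α + β + 2) * jacP (α + 1) β n x ∧
      (2 * n + α + β + 3) * jacP α β (n + 1) x
        = (n + α + β + 2) * jacP (α + 1) β (n + 1) x - (n + β + 1) * jacP (α + 1) β n x := by
  have hs' : -2 < α + 1 + β := by linarith
  induction n with
  | zero =>
    have hP := two_mul_jacP_one hs x
    have hQ := two_mul_jacP_one hs' x
    have h₀ : ∀ a, jacP a β 0 x = 1 := fun _ => rfl
    simp only [h₀, CharP.cast_eq_zero]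
    exact ⟨by linear_combination hP,
      by linear_combination (α + β + 3) / 2 * hP - (α + β + 2) / 2 * hQ⟩
  | succ n ih =>
    obtain ⟨ha, hb⟩ := ih
    have hk : (0 : ℝ) ≤ n := n.cast_nonneg
    have hP := jacP_add_two hs n x
    have hQ := jacP_add_two hs' n x
    have ha' : 2 * ((n + 2) * jacP α β (n + 2) x - (n + α + 2) * jacP α β (n + 1) x)
        = (x - 1) * (2 * n + α + β + 4) * jacP (α + 1) β (n + 1) x := by
      have hF : ((n : ℝ) + α + β + 2) * (2 * n + α + β + 2) ≠ 0 := by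
        apply mul_ne_zero <;> linarith
      refine mul_left_cancel₀ hF ?_
      linear_combination hP + (x - 1) * (2 * n + α + β + 4) * (2 * n + α + β + 2) * hb
        + (2 * n + α + β + 4) * (n + β + 1) * ha
    refine ⟨by push_cast; linear_combination ha', ?_⟩
    have hF : 2 * ((n : ℝ) + 2) * (2 * n + α + β + 3) ≠ 0 := by
      apply mul_ne_zero <;> [apply mul_ne_zero; skip] <;> linarith
    refine mul_left_cancel₀ hF ?_
    push_cast
    linear_combination -hQ + (2 * n + α + β + 3) * (2 * n + α + β + 5) * ha'
      + 2 * (n + α + 2) * (2 * n + α + β + 5) * hb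

end Recurrence

section Normalization

variable {α : ℝ}

lemma cBarBarOdd_zero (hα : -1 < α) : cBarBarOdd α 0 = 1 := by
  have : Real.Gamma (α + 1) ≠ 0 := (Real.Gamma_pos_of_pos (by linarith)).ne'
  simp [cBarBarOdd, this]

lemma cBarBarOdd_succ (hα : -1 < α) (k : ℕ) :
    (α + k + 1) * cBarBarOdd α (k + 1) = (k + 1) * cBarBarOdd α k := by
  have hk : (0 : ℝ) ≤ k := k.cast_nonneg
  have hc : α + k + 1 ≠ 0 := by linarith
  have hΓ : Real.Gamma (α + k + 1) ≠ 0 := (Real.Gamma_pos_of_pos (by linarith)).ne'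
  simp only [cBarBarOdd, Nat.cast_add_one, ← add_assoc α,
    Real.Gamma_add_one (by linarith : (k : ℝ) + 1 ≠ 0), Real.Gamma_add_one hc]
  field_simp

lemma cBarEven_eq (β : ℝ) (hα : -1 < α) (k : ℕ) :
    2 * (α + k + 1) * cBarEven α β k = (2 * k + α + β + 2) * cBarBarOdd α k := by
  have hk : (0 : ℝ) ≤ k := k.cast_nonneg
  have hc : α + k + 1 ≠ 0 := by linarith
  have hΓ : Real.Gamma (α + k + 1) ≠ 0 := (Real.Gamma_pos_of_pos (by linarith)).ne'
  rw [cBarEven, cBarBarOdd, show α + (k : ℝ) + 2 = α + k + 1 + 1 by ring,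
    Real.Gamma_add_one hc]
  field_simp

end Normalization

section Telescoping

variable {α β : ℝ}

lemma cBarBarOdd_mul_jacP_succ_sub (hα : -1 < α) (hs : -2 < α + β) (k : ℕ) (x : ℝ) :
    cBarBarOdd α (k + 1) * jacP α β (k + 1) x - cBarBarOdd α k * jacP α β k x
      = (x - 1) * (cBarEven α β k * jacP (α + 1) β k x) := by
  have hk : (0 : ℝ) < α + k + 1 := by linarith [k.cast_nonneg (α := ℝ)]
  refine mul_left_cancel₀ (mul_ne_zero two_ne_zero hk.ne') ?_
  linear_combination 2 * jacP α β (k + 1) x * cBarBarOdd_succ hα k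
    + cBarBarOdd α k * (jacP_contiguous hs k x).1
    - (x - 1) * jacP (α + 1) β k x * cBarEven_eq β hα k

lemma cBarBarOdd_mul_jacP_one (hα : -1 < α) (hs : -2 < α + β) (k : ℕ) :
    cBarBarOdd α k * jacP α β k 1 = 1 := by
  induction k with
  | zero => rw [cBarBarOdd_zero hα, one_mul]; rfl
  | succ k ih => linear_combination cBarBarOdd_mul_jacP_succ_sub hα hs k 1 + ih

lemma cBarBarOdd_mul_jacP_sub_eq_sum_Icc (hα : -1 < α) (hs : -2 < α + β) {a b : ℕ} (hab : a ≤ b)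
    (c : ℕ) (x : ℝ) :
    cBarBarOdd α (b + 1 + c) * jacP α β (b + 1 + c) x - cBarBarOdd α (a + c) * jacP α β (a + c) x
      = (x - 1) * ∑ m ∈ Finset.Icc a b, cBarEven α β (m + c) * jacP (α + 1) β (m + c) x := by
  rw [Finset.mul_sum,
    ← Finset.sum_Icc_sub (f := fun m => cBarBarOdd α (m + c) * jacP α β (m + c) x) hab]
  refine Finset.sum_congr rfl fun m _ => ?_
  rw [Nat.add_right_comm]
  exact cBarBarOdd_mul_jacP_succ_sub hα hs (m + c) x

end Telescoping

namespace Matrix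

variable {R : Type*} [CommRing R]

theorem det_eq_det_sub_succ_of_col_last_eq_one {n : ℕ} (A : Matrix (Fin (n + 1)) (Fin (n + 1)) R)
    (h : ∀ i, A i (Fin.last n) = 1) :
    A.det = (of fun i j : Fin n => A i.castSucc j.castSucc - A i.succ j.castSucc).det := by
  let B : Matrix (Fin (n + 1)) (Fin (n + 1)) R :=
    Fin.cases (A 0) fun i => A i.succ - A i.castSucc
  have hAB : A.det = B.det :=
    det_eq_of_forall_row_eq_smul_add_pred (fun _ => 1) (fun _ => rfl) fun i j => by simp [B]
  -- After the row operations the last column is the first unit vector.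
  have hminor : B.submatrix Fin.succ Fin.castSucc
      = -of fun i j : Fin n => A i.castSucc j.castSucc - A i.succ j.castSucc := by
    ext i j
    simp only [neg_apply, of_apply, neg_sub]
    rfl
  rw [hAB, det_succ_column B (Fin.last n), Fin.sum_univ_succ, Finset.sum_eq_zero fun i _ => by
    simp [B, h], add_zero]
  simp only [Fin.val_zero, zero_add, Fin.succAbove_zero, Fin.succAbove_last, hminor, det_neg,
    Fintype.card_fin, B, Fin.cases_zero, h, mul_one, ← mul_assoc, ← pow_add, Fin.val_last,
    ← two_mul, pow_mul, neg_one_sq, one_pow, one_mul]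

theorem det_of_sum_row {n ι : Type*} [Fintype n] [DecidableEq n] (S : n → Finset ι)
    (f : n → ι → n → R) :
    (of fun i j => ∑ k ∈ S i, f i k j).det
      = ∑ r ∈ Fintype.piFinset S, (of fun i j => f i (r i) j).det := by
  have hrows : (of fun i j => ∑ k ∈ S i, f i k j) = fun i => ∑ k ∈ S i, f i k := by
    ext i j
    simp [Finset.sum_apply]
  rw [hrows]
  exact (detRowAlternating (R := R) (n := n)).toMultilinearMap.map_sum_finset f S

end Matrix

lemma interlacing_iff_mem_piFinset {p : ℕ} {lam : Fin (p + 1) → ℕ} (hlam : Antitone lam)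
    (m : Fin p → ℕ) :
    (Antitone m ∧ ∀ i : Fin p, m i ≤ lam i.castSucc ∧ lam i.succ ≤ m i)
      ↔ m ∈ Fintype.piFinset fun i => Finset.Icc (lam i.succ) (lam i.castSucc) := by
  simp only [Fintype.mem_piFinset, Finset.mem_Icc]
  refine ⟨fun h i => ⟨(h.2 i).2, (h.2 i).1⟩, fun h => ⟨fun i j hij => ?_, fun i => (h i).symm⟩⟩
  rcases hij.eq_or_lt with rfl | hlt
  · rfl
  · calc m j ≤ lam j.castSucc := (h j).2
      _ ≤ lam i.succ := hlam (Fin.succ_le_castSucc_iff.mpr hlt)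
      _ ≤ m i := (h i).1

lemma tsum_interlacing_eq_sum {M : Type*} [AddCommMonoid M] [TopologicalSpace M] {p : ℕ}
    {lam : Fin (p + 1) → ℕ} (hlam : Antitone lam) (f : (Fin p → ℕ) → M) :
    ∑' μ : {m : Fin p → ℕ // Antitone m ∧ ∀ i : Fin p, m i ≤ lam i.castSucc ∧ lam i.succ ≤ m i},
        f μ.1
      = ∑ m ∈ Fintype.piFinset fun i => Finset.Icc (lam i.succ) (lam i.castSucc), f m :=
  ((Equiv.subtypeEquivRight (interlacing_iff_mem_piFinset hlam)).tsum_eq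
    fun μ => f μ.1).trans (Finset.tsum_subtype _ f)

theorem stmt17_general (α β : ℝ) (hα : -1 < α) (hβ : -1 < β)
    (p : ℕ) (lam : Fin (p+1) → ℕ) (hlam : Antitone lam)
    (x : Fin p → ℝ) :
    Matrix.det (Matrix.of fun i j : Fin (p+1) =>
      if h : (j:ℕ) < p then
        cBarBarOdd α (lam i + (p - (i:ℕ))) * jacP α β (lam i + (p - (i:ℕ))) (x ⟨(j:ℕ), h⟩)
      else
        cBarBarOdd α (lam i + (p - (i:ℕ))) * jacP α β (lam i + (p - (i:ℕ))) 1)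
    = (∏ j : Fin p, (x j - 1)) *
      ∑' μ : {m : Fin p → ℕ // Antitone m ∧
                ∀ i : Fin p, m i ≤ lam i.castSucc ∧ lam i.succ ≤ m i},
        Matrix.det (Matrix.of fun i j : Fin p =>
          cBarEven α β (μ.1 i + (p - 1 - (i:ℕ))) *
            jacP (α+1) β (μ.1 i + (p - 1 - (i:ℕ))) (x j)) := by
  have hs : -2 < α + β := by linarith
  rw [Matrix.det_eq_det_sub_succ_of_col_last_eq_one _ fun i => by
      simpa using cBarBarOdd_mul_jacP_one hα hs _,
    tsum_interlacing_eq_sum hlam fun m => (Matrix.of fun i j : Fin p =>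
      cBarEven α β (m i + (p - 1 - i)) * jacP (α + 1) β (m i + (p - 1 - i)) (x j)).det,
    ← Matrix.det_of_sum_row _ fun (i : Fin p) (m : ℕ) (j : Fin p) =>
      cBarEven α β (m + (p - 1 - i)) * jacP (α + 1) β (m + (p - 1 - i)) (x j),
    ← Matrix.det_mul_row fun j => x j - 1]
  congr 1
  ext i j
  simp only [Matrix.of_apply, Fin.val_castSucc, Fin.val_succ, dif_pos j.isLt, Fin.eta]
  have hi := i.isLt
  rw [show p - (i : ℕ) = 1 + (p - 1 - i) by omega, show p - ((i : ℕ) + 1) = p - 1 - i by omega,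
    ← add_assoc]
  exact cBarBarOdd_mul_jacP_sub_eq_sum_Icc hα hs (hlam (Fin.castSucc_le_succ i)) _ _

/-- the branching rule: expanding the (p+1)×(p+1) determinant with one
column evaluated at 1 as a sum over interlacing partitions μ ≺ λ. -/
theorem stmt17 (α β : ℝ) (hα : -1 < α) (hβ : -1 < β)
    (p : ℕ) (hp : 1 ≤ p) (lam : Fin (p+1) → ℕ) (hlam : Antitone lam)
    (x : Fin p → ℝ) :
    Matrix.det (Matrix.of fun i j : Fin (p+1) =>
      if h : (j:ℕ) < p then
        cBarBarOdd α (lam i + (p - (i:ℕ))) * jacP α β (lam i + (p - (i:ℕ))) (x ⟨(j:ℕ), h⟩)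
      else
        cBarBarOdd α (lam i + (p - (i:ℕ))) * jacP α β (lam i + (p - (i:ℕ))) 1)
    = (∏ j : Fin p, (x j - 1)) *
      ∑' μ : {m : Fin p → ℕ // Antitone m ∧
                ∀ i : Fin p, m i ≤ lam i.castSucc ∧ lam i.succ ≤ m i},
        Matrix.det (Matrix.of fun i j : Fin p =>
          cBarEven α β (μ.1 i + (p - 1 - (i:ℕ))) *
            jacP (α+1) β (μ.1 i + (p - 1 - (i:ℕ))) (x j)) :=
  stmt17_general α β hα hβ p lam hlam x
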